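/- arXiv:1604.02119 — 2 statements merged into one kernel-verified Lean document; each statement's English description precedes it below -/
import Mathlib

section
/- For α > 1, the map A ↦ tr(A^{α/(α−1)}) on positive semidefinite matrices is strictly convex. -/
open scoped Matrix ComplexOrder Kronecker

/-- Matrix power via the functional calculus: for a Hermitian matrix `A`,
`mpow A r` is `U * diag (eigenvalues ^ r) * Uᴴ` (with the convention
`0 ^ r = 0` for `r ≠ 0`, i.e. powers are taken on the support). -/
noncomputable def mpow {m : Type*} [Fintype m] [DecidableEq m]
    (A : Matrix m m ℂ) (r : ℝ) : Matrix m m ℂ :=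
  if hA : A.IsHermitian then
    (hA.eigenvectorUnitary : Matrix m m ℂ) *
      Matrix.diagonal (fun i => ((hA.eigenvalues i ^ r : ℝ) : ℂ)) *
      (hA.eigenvectorUnitary : Matrix m m ℂ)ᴴ
  else 0

/-- The sandwiched trace functional `Q̃_α(ρ‖σ) = tr[(σ^γ ρ σ^γ)^α]`, with `γ = (1-α)/(2α)`. -/
noncomputable def Qt {m : Type*} [Fintype m] [DecidableEq m]
    (α : ℝ) (ρ σ : Matrix m m ℂ) : ℂ :=
  Matrix.trace (mpow (mpow σ ((1 - α) / (2 * α)) * ρ * mpow σ ((1 - α) / (2 * α))) α)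

/-- `ρ` is a density matrix. -/
def IsDensity {m : Type*} [Fintype m] (ρ : Matrix m m ℂ) : Prop :=
  ρ.PosSemidef ∧ ρ.trace = 1

/-!
Let the unitary `U` diagonalize `C = l • A + (1 - l) • B` and let `aᵢ`, `bᵢ` be the diagonal
entries of `U⋆AU` and `U⋆BU`, so that the eigenvalues of `C` are `l aᵢ + (1 - l) bᵢ`.
If `W` diagonalizes `A`, then `aᵢ` is the average of the eigenvalues of `A` with the weights
`|(W⋆U)ⱼᵢ|²`, and `(U⋆ f(A) U)ᵢᵢ` is the same average of their images, so Jensen gives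
`f aᵢ ≤ (U⋆ f(A) U)ᵢᵢ`. Summing `f (l aᵢ + (1 - l) bᵢ) ≤ l f aᵢ + (1 - l) f bᵢ` over `i` yields
the trace inequality for every strictly convex `f`, here `x ↦ x ^ (α / (α - 1))` on `[0, ∞)`.
If it is an equality, then `aᵢ = bᵢ` and Jensen is an equality, which makes each column of `U`
an eigenvector of `A` for `aᵢ` and of `B` for `bᵢ`; hence `A = B`.
-/

namespace Matrix.IsHermitian

variable {n 𝕜 : Type*} [RCLike 𝕜] [Fintype n] [DecidableEq n] {A : Matrix n n 𝕜}
  (hA : A.IsHermitian) (U : Matrix n n 𝕜)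

/-- The weight of the `j`-th eigenvalue of `A` in the `i`-th diagonal entry of
`star U * A * U`. -/
noncomputable def conjWeight (j i : n) : ℝ :=
  ‖(star (hA.eigenvectorUnitary : Matrix n n 𝕜) * U) j i‖ ^ 2

lemma star_mul_cfc_mul (f : ℝ → ℝ) :
    star U * cfc f A * U =
      star (star (hA.eigenvectorUnitary : Matrix n n 𝕜) * U) *
        diagonal (RCLike.ofReal ∘ f ∘ hA.eigenvalues) *
        (star (hA.eigenvectorUnitary : Matrix n n 𝕜) * U) := by
  simp only [hA.cfc_eq, IsHermitian.cfc, Unitary.conjStarAlgAut_apply, star_mul, star_star,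
    Matrix.mul_assoc]

lemma star_mul_cfc_mul_apply_self (f : ℝ → ℝ) (i : n) :
    (star U * cfc f A * U) i i = ((∑ j, hA.conjWeight U j i * f (hA.eigenvalues j) : ℝ) : 𝕜) := by
  rw [hA.star_mul_cfc_mul, Matrix.mul_assoc, Matrix.mul_apply]
  push_cast [conjWeight, ← RCLike.conj_mul]
  refine Finset.sum_congr rfl fun j _ => ?_
  simp only [diagonal_mul, star_apply, Function.comp_apply, RCLike.star_def]
  ring

lemma star_mul_mul_apply_self (i : n) :
    (star U * A * U) i i = ((∑ j, hA.conjWeight U j i * hA.eigenvalues j : ℝ) : 𝕜) := by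
  simpa only [cfc_id ℝ A hA.isSelfAdjoint, id] using hA.star_mul_cfc_mul_apply_self U id i

variable {U}

lemma star_eigenvectorUnitary_mul_mem (hU : U ∈ unitaryGroup n 𝕜) :
    star (hA.eigenvectorUnitary : Matrix n n 𝕜) * U ∈ unitaryGroup n 𝕜 :=
  Submonoid.mul_mem _ (Unitary.star_mem hA.eigenvectorUnitary.2) hU

lemma sum_conjWeight (hU : U ∈ unitaryGroup n 𝕜) (i : n) : ∑ j, hA.conjWeight U j i = 1 := by
  have h := congrFun (congrFun
    (mem_unitaryGroup_iff'.1 (hA.star_eigenvectorUnitary_mul_mem hU)) i) i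
  rw [Matrix.mul_apply, one_apply_eq] at h
  have : ((∑ j, hA.conjWeight U j i : ℝ) : 𝕜) = 1 := by
    rw [← h]
    push_cast
    exact Finset.sum_congr rfl fun j _ => by simp [conjWeight, ← RCLike.conj_mul]
  exact_mod_cast this

lemma re_star_mul_mul_apply_self_mem {s : Set ℝ} (hs : Convex ℝ s)
    (hAs : ∀ j, hA.eigenvalues j ∈ s) (hU : U ∈ unitaryGroup n 𝕜) (i : n) :
    RCLike.re ((star U * A * U) i i) ∈ s := by
  rw [hA.star_mul_mul_apply_self, RCLike.ofReal_re]
  exact hs.sum_mem (fun j _ => sq_nonneg _) (hA.sum_conjWeight hU i) fun j _ => hAs j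

lemma star_eigenvectorUnitary_mul_cfc_mul (f : ℝ → ℝ) :
    star (hA.eigenvectorUnitary : Matrix n n 𝕜) * cfc f A *
        (hA.eigenvectorUnitary : Matrix n n 𝕜) =
      diagonal (RCLike.ofReal ∘ f ∘ hA.eigenvalues) := by
  rw [hA.cfc_eq, IsHermitian.cfc, ← Unitary.conjStarAlgAut_star_apply (S := 𝕜),
    ← Unitary.conjStarAlgAut_symm, StarAlgEquiv.symm_apply_apply]

lemma re_star_eigenvectorUnitary_mul_cfc_mul_apply_self (f : ℝ → ℝ) (i : n) :
    RCLike.re ((star (hA.eigenvectorUnitary : Matrix n n 𝕜) * cfc f A *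
        (hA.eigenvectorUnitary : Matrix n n 𝕜)) i i) =
      f (RCLike.re ((star (hA.eigenvectorUnitary : Matrix n n 𝕜) * A *
        (hA.eigenvectorUnitary : Matrix n n 𝕜)) i i)) := by
  have hid := hA.star_eigenvectorUnitary_mul_cfc_mul id
  rw [cfc_id ℝ A hA.isSelfAdjoint] at hid
  simp [hA.star_eigenvectorUnitary_mul_cfc_mul, hid]

end Matrix.IsHermitian

namespace Matrix

variable {n R : Type*} [Fintype n] [DecidableEq n] [CommRing R] [StarRing R] {U : Matrix n n R}

lemma trace_star_mul_mul (hU : U ∈ unitaryGroup n R) (M : Matrix n n R) :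
    trace (star U * M * U) = trace M := by
  rw [trace_mul_cycle, mem_unitaryGroup_iff.1 hU, Matrix.one_mul]

lemma re_trace_eq_sum_re_star_mul_mul_apply_self {𝕜 : Type*} [RCLike 𝕜] {U : Matrix n n 𝕜}
    (hU : U ∈ unitaryGroup n 𝕜) (M : Matrix n n 𝕜) :
    RCLike.re (trace M) = ∑ i, RCLike.re ((star U * M * U) i i) := by
  rw [← trace_star_mul_mul hU, trace, map_sum]
  rfl

lemma star_mul_diagonal_mul_eq_diagonal (hU : U ∈ unitaryGroup n R) {d q : n → R}
    (h : ∀ j i, U j i ≠ 0 → d j = q i) : star U * diagonal d * U = diagonal q := by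
  have hcomm : diagonal d * U = U * diagonal q := by
    ext j i
    rw [diagonal_mul, mul_diagonal]
    by_cases hji : U j i = 0
    · simp [hji]
    · rw [h j i hji, mul_comm]
  rw [Matrix.mul_assoc, hcomm, ← Matrix.mul_assoc, mem_unitaryGroup_iff'.1 hU,
    Matrix.one_mul]

lemma star_mul_mul_injective (hU : U ∈ unitaryGroup n R) :
    Function.Injective fun M : Matrix n n R => star U * M * U := by
  have hcancel (M : Matrix n n R) : U * (star U * M * U) * star U = M :=
    calc _ = U * star U * M * (U * star U) := by simp only [Matrix.mul_assoc]
      _ = M := by rw [mem_unitaryGroup_iff.1 hU, Matrix.one_mul, Matrix.mul_one]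
  intro M N h
  rw [← hcancel M, ← hcancel N]
  exact congrArg (fun X => U * X * star U) h

end Matrix

open Matrix

theorem StrictConvexOn.eq_and_eq_of_map_convexCombo_eq {s : Set ℝ} {f : ℝ → ℝ}
    (hf : StrictConvexOn ℝ s f) {x y X Y l : ℝ} (hx : x ∈ s) (hy : y ∈ s) (hX : f x ≤ X)
    (hY : f y ≤ Y) (hl0 : 0 < l) (hl1 : l < 1)
    (h : f (l * x + (1 - l) * y) = l * X + (1 - l) * Y) : x = y ∧ f x = X ∧ f y = Y := by
  have hconv : f (l * x + (1 - l) * y) ≤ l * f x + (1 - l) * f y :=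
    hf.convexOn.2 hx hy hl0.le (by linarith) (by ring)
  have hlX := mul_nonneg hl0.le (sub_nonneg.2 hX)
  have hlY := mul_nonneg (sub_nonneg.2 hl1.le) (sub_nonneg.2 hY)
  have hfx : f x = X := by
    have : l * (X - f x) = 0 := by linarith
    linarith [(mul_eq_zero.1 this).resolve_left hl0.ne']
  have hfy : f y = Y := by
    have : (1 - l) * (Y - f y) = 0 := by linarith
    linarith [(mul_eq_zero.1 this).resolve_left (sub_pos.2 hl1).ne']
  refine ⟨by_contra fun hxy => ?_, hfx, hfy⟩
  have := hf.2 hx hy hxy hl0 (sub_pos.2 hl1) (by ring)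
  simp only [smul_eq_mul] at this
  linarith

variable {n 𝕜 : Type*} [RCLike 𝕜] [Fintype n] [DecidableEq n] {A B U : Matrix n n 𝕜}
  {s : Set ℝ} {f : ℝ → ℝ} {l : ℝ}

theorem ConvexOn.map_re_diag_conj_le (hf : ConvexOn ℝ s f) (hA : A.IsHermitian)
    (hAs : ∀ j, hA.eigenvalues j ∈ s) (hU : U ∈ unitaryGroup n 𝕜) (i : n) :
    f (RCLike.re ((star U * A * U) i i)) ≤ RCLike.re ((star U * cfc f A * U) i i) := by
  rw [hA.star_mul_mul_apply_self, hA.star_mul_cfc_mul_apply_self, RCLike.ofReal_re,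
    RCLike.ofReal_re]
  exact hf.map_sum_le (fun j _ => sq_nonneg _) (hA.sum_conjWeight hU i) fun j _ => hAs j

theorem StrictConvexOn.star_mul_mul_eq_diagonal_of_map_re_diag_conj_eq
    (hf : StrictConvexOn ℝ s f) (hA : A.IsHermitian) (hAs : ∀ j, hA.eigenvalues j ∈ s)
    (hU : U ∈ unitaryGroup n 𝕜)
    (h : ∀ i, f (RCLike.re ((star U * A * U) i i)) = RCLike.re ((star U * cfc f A * U) i i)) :
    star U * A * U = diagonal (fun i => (RCLike.re ((star U * A * U) i i) : 𝕜)) := by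
  set V := star (hA.eigenvectorUnitary : Matrix n n 𝕜) * U
  have hjensen (j i : n) (hji : V j i ≠ 0) :
      hA.eigenvalues j = ∑ k, hA.conjWeight U k i * hA.eigenvalues k := by
    have hi := h i
    rw [hA.star_mul_mul_apply_self, hA.star_mul_cfc_mul_apply_self, RCLike.ofReal_re,
      RCLike.ofReal_re] at hi
    exact (hf.map_sum_eq_iff' (fun j _ => sq_nonneg _) (hA.sum_conjWeight hU i)
      (fun j _ => hAs j)).1 hi j (Finset.mem_univ j) (pow_ne_zero 2 (norm_ne_zero_iff.2 hji))
  calc star U * A * U = star V * diagonal (RCLike.ofReal ∘ hA.eigenvalues) * V := by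
        simpa only [cfc_id ℝ A hA.isSelfAdjoint, Function.id_comp] using hA.star_mul_cfc_mul U id
    _ = diagonal (fun i => ((∑ k, hA.conjWeight U k i * hA.eigenvalues k : ℝ) : 𝕜)) :=
        star_mul_diagonal_mul_eq_diagonal (hA.star_eigenvectorUnitary_mul_mem hU)
          fun j i hji => by rw [Function.comp_apply, hjensen j i hji]
    _ = _ := by simp only [hA.star_mul_mul_apply_self, RCLike.ofReal_re]

section ConvexCombination

variable (hA : A.IsHermitian) (hB : B.IsHermitian) (hAs : ∀ j, hA.eigenvalues j ∈ s)
  (hBs : ∀ j, hB.eigenvalues j ∈ s) (hU : U ∈ unitaryGroup n 𝕜)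
include hA hB hAs hBs hU

theorem ConvexOn.map_convexCombo_re_diag_conj_le (hf : ConvexOn ℝ s f) (hl0 : 0 ≤ l)
    (hl1 : l ≤ 1) (i : n) :
    f (l * RCLike.re ((star U * A * U) i i) + (1 - l) * RCLike.re ((star U * B * U) i i)) ≤
      l * RCLike.re ((star U * cfc f A * U) i i) +
        (1 - l) * RCLike.re ((star U * cfc f B * U) i i) :=
  (hf.2 (hA.re_star_mul_mul_apply_self_mem hf.1 hAs hU i)
    (hB.re_star_mul_mul_apply_self_mem hf.1 hBs hU i) hl0 (sub_nonneg.2 hl1) (by ring)).trans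
    (add_le_add (mul_le_mul_of_nonneg_left (hf.map_re_diag_conj_le hA hAs hU i) hl0)
      (mul_le_mul_of_nonneg_left (hf.map_re_diag_conj_le hB hBs hU i) (sub_nonneg.2 hl1)))

theorem StrictConvexOn.eq_of_map_convexCombo_re_diag_conj_eq (hf : StrictConvexOn ℝ s f)
    (hl0 : 0 < l) (hl1 : l < 1)
    (h : ∀ i, f (l * RCLike.re ((star U * A * U) i i) +
        (1 - l) * RCLike.re ((star U * B * U) i i)) =
      l * RCLike.re ((star U * cfc f A * U) i i) +
        (1 - l) * RCLike.re ((star U * cfc f B * U) i i)) :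
    A = B := by
  have hEq (i : n) := hf.eq_and_eq_of_map_convexCombo_eq
    (hA.re_star_mul_mul_apply_self_mem hf.1 hAs hU i)
    (hB.re_star_mul_mul_apply_self_mem hf.1 hBs hU i)
    (hf.convexOn.map_re_diag_conj_le hA hAs hU i) (hf.convexOn.map_re_diag_conj_le hB hBs hU i)
    hl0 hl1 (h i)
  refine star_mul_mul_injective hU ?_
  change star U * A * U = star U * B * U
  rw [hf.star_mul_mul_eq_diagonal_of_map_re_diag_conj_eq hA hAs hU fun i => (hEq i).2.1,
    hf.star_mul_mul_eq_diagonal_of_map_re_diag_conj_eq hB hBs hU fun i => (hEq i).2.2]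
  simp only [(hEq _).1]

end ConvexCombination

theorem StrictConvexOn.re_trace_cfc_convexCombo_lt (hf : StrictConvexOn ℝ s f)
    (hA : A.IsHermitian) (hB : B.IsHermitian) (hAs : ∀ j, hA.eigenvalues j ∈ s)
    (hBs : ∀ j, hB.eigenvalues j ∈ s) (hAB : A ≠ B) (hl0 : 0 < l) (hl1 : l < 1) :
    RCLike.re (trace (cfc f (l • A + (1 - l) • B))) <
      l * RCLike.re (trace (cfc f A)) + (1 - l) * RCLike.re (trace (cfc f B)) := by
  have hC : (l • A + (1 - l) • B).IsHermitian :=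
    (hA.smul (IsSelfAdjoint.all l)).add (hB.smul (IsSelfAdjoint.all (1 - l)))
  set U : Matrix n n 𝕜 := (hC.eigenvectorUnitary : Matrix n n 𝕜)
  have hU : U ∈ unitaryGroup n 𝕜 := hC.eigenvectorUnitary.2
  have hCdiag (i : n) : RCLike.re ((star U * cfc f (l • A + (1 - l) • B) * U) i i) =
      f (l * RCLike.re ((star U * A * U) i i) + (1 - l) * RCLike.re ((star U * B * U) i i)) := by
    refine (hC.re_star_eigenvectorUnitary_mul_cfc_mul_apply_self f i).trans ?_
    simp [U, Matrix.mul_add, Matrix.add_mul, RCLike.smul_re]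
  simp only [re_trace_eq_sum_re_star_mul_mul_apply_self hU, hCdiag, Finset.mul_sum,
    ← Finset.sum_add_distrib]
  have hle (i : n) := hf.convexOn.map_convexCombo_re_diag_conj_le hA hB hAs hBs hU hl0.le hl1.le i
  refine lt_of_le_of_ne (Finset.sum_le_sum fun i _ => hle i) fun heq => hAB ?_
  exact hf.eq_of_map_convexCombo_re_diag_conj_eq hA hB hAs hBs hU hl0 hl1 fun i =>
    (Finset.sum_eq_sum_iff_of_le fun i _ => hle i).1 heq i (Finset.mem_univ i)

lemma mpow_eq_cfc {m : Type*} [Fintype m] [DecidableEq m] {A : Matrix m m ℂ}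
    (hA : A.IsHermitian) (r : ℝ) : mpow A r = cfc (fun x : ℝ => x ^ r) A := by
  rw [mpow, dif_pos hA, hA.cfc_eq, IsHermitian.cfc, Unitary.conjStarAlgAut_apply]
  rfl

/-- For `α > 1`, the map `A ↦ tr (A ^ (α/(α-1)))` is strictly convex on
positive semidefinite matrices. -/
theorem trace_rpow_strictConvex {n : ℕ}
    (α : ℝ) (hα : 1 < α)
    (A B : Matrix (Fin n) (Fin n) ℂ) (hA : A.PosSemidef) (hB : B.PosSemidef)
    (hAB : A ≠ B) (l : ℝ) (hl0 : 0 < l) (hl1 : l < 1) :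
    (Matrix.trace (mpow (l • A + (1 - l) • B) (α / (α - 1)))).re
      < l * (Matrix.trace (mpow A (α / (α - 1)))).re
        + (1 - l) * (Matrix.trace (mpow B (α / (α - 1)))).re := by
  have hp : 1 < α / (α - 1) := (one_lt_div (by linarith)).2 (by linarith)
  have hC : (l • A + (1 - l) • B).IsHermitian :=
    (hA.1.smul (IsSelfAdjoint.all l)).add (hB.1.smul (IsSelfAdjoint.all (1 - l)))
  rw [mpow_eq_cfc hC, mpow_eq_cfc hA.1, mpow_eq_cfc hB.1]
  exact (strictConvexOn_rpow hp).re_trace_cfc_convexCombo_lt hA.1 hB.1 hA.eigenvalues_nonneg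
    hB.eigenvalues_nonneg hAB hl0 hl1
end

section
/- For α > 1, positive definite σ, and density matrix ρ, the supremum over positive semidefinite H of f_α(H,ρ,σ) = α tr(ρH) − (α−1) tr[(σ^{−γ} H σ^{−γ})^{α/(α−1)}] equals Q̃_α(ρ‖σ) = tr[(σ^γ ρ σ^γ)^α], and is attained at Ĥ = σ^γ (σ^γ ρ σ^γ)^{α−1} σ^γ, with γ = (1−α)/(2α). -/
open scoped Matrix ComplexOrder Kronecker

/-- The variational functional
`f_α(H,ρ,σ) = α tr(ρH) − (α−1) tr[(σ^{−γ} H σ^{−γ})^{α/(α−1)}]`, `γ = (1−α)/(2α)`. -/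
noncomputable def fAlpha {m : Type*} [Fintype m] [DecidableEq m]
    (α : ℝ) (H ρ σ : Matrix m m ℂ) : ℝ :=
  α * (Matrix.trace (ρ * H)).re
    - (α - 1) * (Matrix.trace (mpow
        (mpow σ (-((1 - α) / (2 * α))) * H * mpow σ (-((1 - α) / (2 * α))))
        (α / (α - 1)))).re

/-!
Write `S = σ^γ` and `A = S ρ S`, so that `Q̃_α(ρ‖σ) = tr A^α`. Every `H ≥ 0` is `S K S`
with `K = σ^{-γ} H σ^{-γ} ≥ 0`, and then `f_α(H,ρ,σ) = α tr(AK) - (α-1) tr K^{α'}`, where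
`α' = α/(α-1)` is the Hölder conjugate of `α`. In eigenbases `A = U diag(a) U*`,
`K = V diag(μ) V*` one has `tr(AK) = ∑ a_i |W_ij|² μ_j` with `W = U* V` unitary, so
`(|W_ij|²)` is doubly stochastic and Young's inequality `a_i μ_j ≤ a_i^α/α + μ_j^{α'}/α'`,
applied termwise, gives `α tr(AK) ≤ tr A^α + (α-1) tr K^{α'}`. Equality holds at
`K = A^{α-1}`, i.e. at `H = Ĥ`.
-/

namespace Matrix

variable {m : Type*} [Fintype m] [DecidableEq m]

lemma continuousOn_spectrum_real (A : Matrix m m ℂ) (f : ℝ → ℝ) :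
    ContinuousOn f (spectrum ℝ A) :=
  A.finite_real_spectrum.continuousOn f

lemma IsHermitian.mpow_eq_cfc {A : Matrix m m ℂ} (hA : A.IsHermitian) (r : ℝ) :
    mpow A r = cfc (· ^ r : ℝ → ℝ) A := by
  rw [hA.cfc_eq, IsHermitian.cfc, Unitary.conjStarAlgAut_apply, mpow, dif_pos hA,
    star_eq_conjTranspose]
  rfl

lemma IsHermitian.isHermitian_mpow {A : Matrix m m ℂ} (hA : A.IsHermitian) (r : ℝ) :
    (mpow A r).IsHermitian := by
  rw [hA.mpow_eq_cfc]
  exact cfc_predicate _ A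

lemma IsHermitian.trace_mpow {A : Matrix m m ℂ} (hA : A.IsHermitian) (r : ℝ) :
    (mpow A r).trace = ((∑ i, hA.eigenvalues i ^ r : ℝ) : ℂ) := by
  rw [mpow, dif_pos hA, trace_mul_cycle, ← star_eq_conjTranspose,
    Unitary.star_mul_self_of_mem hA.eigenvectorUnitary.2, one_mul, trace_diagonal,
    Complex.ofReal_sum]

lemma PosDef.mpow_mul_mpow_neg {A : Matrix m m ℂ} (hA : A.PosDef) (r : ℝ) :
    mpow A r * mpow A (-r) = 1 := by
  rw [hA.1.mpow_eq_cfc, hA.1.mpow_eq_cfc,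
    ← cfc_mul _ _ A (continuousOn_spectrum_real A _) (continuousOn_spectrum_real A _),
    ← cfc_one ℝ A hA.1.isSelfAdjoint]
  refine cfc_congr fun x hx => ?_
  have hx : 0 < x := by
    obtain ⟨i, rfl⟩ := hA.1.spectrum_real_eq_range_eigenvalues ▸ hx
    exact hA.eigenvalues_pos i
  rw [Pi.one_apply, Real.rpow_neg hx.le, mul_inv_cancel₀ (Real.rpow_pos_of_pos hx r).ne']

lemma PosDef.mpow_neg_mul_mpow {A : Matrix m m ℂ} (hA : A.PosDef) (r : ℝ) :
    mpow A (-r) * mpow A r = 1 := by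
  simpa using hA.mpow_mul_mpow_neg (-r)

lemma PosSemidef.nonneg_of_mem_spectrum {A : Matrix m m ℂ} (hA : A.PosSemidef) {x : ℝ}
    (hx : x ∈ spectrum ℝ A) : 0 ≤ x := by
  obtain ⟨i, rfl⟩ := hA.1.spectrum_real_eq_range_eigenvalues ▸ hx
  exact hA.eigenvalues_nonneg i

lemma PosSemidef.mpow_mpow {A : Matrix m m ℂ} (hA : A.PosSemidef) (r s : ℝ) :
    mpow (mpow A r) s = mpow A (r * s) := by
  rw [(hA.1.isHermitian_mpow r).mpow_eq_cfc, hA.1.mpow_eq_cfc, hA.1.mpow_eq_cfc,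
    ← cfc_comp _ _ A hA.1.isSelfAdjoint ((A.finite_real_spectrum.image _).continuousOn _)
      (continuousOn_spectrum_real A _)]
  exact cfc_congr fun x hx => (Real.rpow_mul (hA.nonneg_of_mem_spectrum hx) r s).symm

lemma PosSemidef.mul_mpow_sub_one {A : Matrix m m ℂ} (hA : A.PosSemidef) {p : ℝ}
    (hp : p ≠ 0) :
    A * mpow A (p - 1) = mpow A p := by
  rw [hA.1.mpow_eq_cfc, hA.1.mpow_eq_cfc]
  conv_lhs => enter [1]; rw [← cfc_id' ℝ A hA.1.isSelfAdjoint]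
  rw [← cfc_mul _ _ A (continuousOn_spectrum_real A _) (continuousOn_spectrum_real A _)]
  refine cfc_congr fun x hx => ?_
  rw [← Real.rpow_one_add' (hA.nonneg_of_mem_spectrum hx) (by simpa using hp), add_sub_cancel]

lemma sum_normSq_row_eq_one {U : Matrix m m ℂ} (hU : U ∈ unitaryGroup m ℂ) (i : m) :
    ∑ j, Complex.normSq (U i j) = 1 := by
  have h := congrFun (congrFun (mem_unitaryGroup_iff.mp hU) i) i
  simp only [mul_apply, star_apply, Complex.star_def, Complex.mul_conj, one_apply_eq] at h
  exact_mod_cast h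

lemma sum_normSq_col_eq_one {U : Matrix m m ℂ} (hU : U ∈ unitaryGroup m ℂ) (j : m) :
    ∑ i, Complex.normSq (U i j) = 1 := by
  simpa [star_apply, Complex.star_def] using
    sum_normSq_row_eq_one (Unitary.star_mem hU) j

lemma trace_diagonal_mul_mul_diagonal_mul_star (d e : m → ℝ) (W : Matrix m m ℂ) :
    (diagonal (fun i => (d i : ℂ)) * W * diagonal (fun j => (e j : ℂ)) * star W).trace
      = ((∑ i, ∑ j, d i * Complex.normSq (W i j) * e j : ℝ) : ℂ) := by
  rw [trace]
  push_cast
  refine Finset.sum_congr rfl fun i _ => ?_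
  rw [diag, mul_apply]
  refine Finset.sum_congr rfl fun j _ => ?_
  rw [mul_diagonal, diagonal_mul, star_apply, Complex.star_def, ← Complex.mul_conj]
  ring

lemma IsHermitian.eq_eigenvectorUnitary_mul_diagonal_mul_star {A : Matrix m m ℂ}
    (hA : A.IsHermitian) :
    A = (hA.eigenvectorUnitary : Matrix m m ℂ) * diagonal (fun i => (hA.eigenvalues i : ℂ)) *
      star (hA.eigenvectorUnitary : Matrix m m ℂ) := by
  conv_lhs => rw [hA.spectral_theorem, Unitary.conjStarAlgAut_apply]
  rfl

lemma IsHermitian.trace_mul_eq_sum {A K : Matrix m m ℂ} (hA : A.IsHermitian)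
    (hK : K.IsHermitian) :
    (A * K).trace = ((∑ i, ∑ j, hA.eigenvalues i *
      Complex.normSq ((star (hA.eigenvectorUnitary : Matrix m m ℂ) * hK.eigenvectorUnitary) i j) *
      hK.eigenvalues j : ℝ) : ℂ) := by
  set U : Matrix m m ℂ := ↑hA.eigenvectorUnitary
  set V : Matrix m m ℂ := ↑hK.eigenvectorUnitary
  set Da := diagonal (fun i => (hA.eigenvalues i : ℂ))
  set Dμ := diagonal (fun j => (hK.eigenvalues j : ℂ))
  rw [← trace_diagonal_mul_mul_diagonal_mul_star]
  calc (A * K).trace = (U * (Da * star U * (V * Dμ * star V))).trace := by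
        rw [hA.eq_eigenvectorUnitary_mul_diagonal_mul_star,
          hK.eq_eigenvectorUnitary_mul_diagonal_mul_star]
        simp only [mul_assoc, U, V, Da, Dμ]
    _ = (Da * star U * (V * Dμ * star V) * U).trace := trace_mul_comm _ _
    _ = (Da * (star U * V) * Dμ * star (star U * V)).trace := by
        simp only [star_mul, star_star, mul_assoc]

theorem PosSemidef.re_trace_mul_le {A K : Matrix m m ℂ} (hA : A.PosSemidef) (hK : K.PosSemidef)
    {p q : ℝ} (hpq : p.HolderConjugate q) :
    (A * K).trace.re
      ≤ (∑ i, hA.1.eigenvalues i ^ p) / p + (∑ j, hK.1.eigenvalues j ^ q) / q := by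
  set a := hA.1.eigenvalues
  set μ := hK.1.eigenvalues
  set w := fun i j =>
    Complex.normSq ((star (hA.1.eigenvectorUnitary : Matrix m m ℂ) * hK.1.eigenvectorUnitary) i j)
  have hW : star (hA.1.eigenvectorUnitary : Matrix m m ℂ) * hK.1.eigenvectorUnitary ∈
      unitaryGroup m ℂ :=
    mul_mem (Unitary.star_mem hA.1.eigenvectorUnitary.2) hK.1.eigenvectorUnitary.2
  rw [hA.1.trace_mul_eq_sum hK.1, Complex.ofReal_re]
  calc ∑ i, ∑ j, a i * w i j * μ j
      ≤ ∑ i, ∑ j, w i j * (a i ^ p / p + μ j ^ q / q) := by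
        refine Finset.sum_le_sum fun i _ => Finset.sum_le_sum fun j _ => ?_
        calc a i * w i j * μ j = w i j * (a i * μ j) := by ring
          _ ≤ _ := mul_le_mul_of_nonneg_left (Real.young_inequality_of_nonneg
            (hA.eigenvalues_nonneg i) (hK.eigenvalues_nonneg j) hpq) (Complex.normSq_nonneg _)
    _ = ∑ i, (∑ j, w i j) * (a i ^ p / p) + ∑ j, (∑ i, w i j) * (μ j ^ q / q) := by
        simp only [mul_add, Finset.sum_add_distrib, Finset.sum_mul]
        rw [Finset.sum_comm (f := fun i j => w i j * (μ j ^ q / q))]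
    _ = (∑ i, a i ^ p) / p + (∑ j, μ j ^ q) / q := by
        simp only [w, sum_normSq_row_eq_one hW, sum_normSq_col_eq_one hW, one_mul,
          Finset.sum_div]

theorem PosSemidef.variational_le_re_trace_mpow {A K : Matrix m m ℂ} (hA : A.PosSemidef)
    (hK : K.PosSemidef) {p : ℝ} (hp : 1 < p) :
    p * (A * K).trace.re - (p - 1) * (mpow K (p / (p - 1))).trace.re
      ≤ (mpow A p).trace.re := by
  have hyoung := hA.re_trace_mul_le hK (.conjExponent hp)
  rw [Real.conjExponent] at hyoung
  rw [hA.1.trace_mpow, hK.1.trace_mpow, Complex.ofReal_re, Complex.ofReal_re]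
  set P := ∑ i, hA.1.eigenvalues i ^ p
  set Q := ∑ j, hK.1.eigenvalues j ^ (p / (p - 1))
  have hp0 : 0 < p := by linarith
  have hscale : p * (P / p + Q / (p / (p - 1))) = P + (p - 1) * Q := by
    have : p - 1 ≠ 0 := by linarith
    field_simp
  linarith [mul_le_mul_of_nonneg_left hyoung hp0.le]

theorem PosSemidef.variational_eq_re_trace_mpow {A : Matrix m m ℂ} (hA : A.PosSemidef) {p : ℝ}
    (hp : 1 < p) :
    p * (A * mpow A (p - 1)).trace.re - (p - 1) * (mpow (mpow A (p - 1)) (p / (p - 1))).trace.re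
      = (mpow A p).trace.re := by
  rw [hA.mul_mpow_sub_one (zero_lt_one.trans hp).ne', hA.mpow_mpow,
    mul_div_cancel₀ _ (sub_pos.2 hp).ne']
  ring

end Matrix

lemma fAlpha_mpow_mul_mul_mpow {m : Type*} [Fintype m] [DecidableEq m] (α : ℝ)
    (ρ K : Matrix m m ℂ) {σ : Matrix m m ℂ} (hσ : σ.PosDef) :
    fAlpha α (mpow σ ((1 - α) / (2 * α)) * K * mpow σ ((1 - α) / (2 * α))) ρ σ =
      α * (mpow σ ((1 - α) / (2 * α)) * ρ * mpow σ ((1 - α) / (2 * α)) * K).trace.re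
        - (α - 1) * (mpow K (α / (α - 1))).trace.re := by
  set γ := (1 - α) / (2 * α)
  set S := mpow σ γ
  set T := mpow σ (-γ)
  have hST : S * T = 1 := hσ.mpow_mul_mpow_neg γ
  have hTS : T * S = 1 := hσ.mpow_neg_mul_mpow γ
  have hK : T * (S * K * S) * T = K := by
    rw [← mul_assoc, ← mul_assoc, hTS, one_mul, mul_assoc, hST, mul_one]
  have htr : (ρ * (S * K * S)).trace = (S * ρ * S * K).trace := by
    rw [show ρ * (S * K * S) = ρ * (S * K) * S by simp only [mul_assoc],
      Matrix.trace_mul_comm]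
    simp only [mul_assoc]
  rw [fAlpha, hK, htr]

/-- For `α > 1`, the supremum over positive semidefinite `H` of `f_α(H,ρ,σ)` equals
`Q̃_α(ρ‖σ)` and is attained at `Ĥ = σ^γ (σ^γ ρ σ^γ)^{α−1} σ^γ`, `γ = (1−α)/(2α)`. -/
theorem fAlpha_sup_eq_Qt {n : ℕ}
    (α : ℝ) (hα : 1 < α)
    (ρ σ : Matrix (Fin n) (Fin n) ℂ) (hρ : IsDensity ρ) (hσ : σ.PosDef) :
    (∀ H : Matrix (Fin n) (Fin n) ℂ, H.PosSemidef →
        fAlpha α H ρ σ ≤ (Qt α ρ σ).re) ∧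
      fAlpha α
        (mpow σ ((1 - α) / (2 * α)) *
          mpow (mpow σ ((1 - α) / (2 * α)) * ρ * mpow σ ((1 - α) / (2 * α))) (α - 1) *
          mpow σ ((1 - α) / (2 * α))) ρ σ
        = (Qt α ρ σ).re := by
  rw [Qt]
  set S := mpow σ ((1 - α) / (2 * α))
  set T := mpow σ (-((1 - α) / (2 * α)))
  have hS : S.IsHermitian := hσ.1.isHermitian_mpow _
  have hT : T.IsHermitian := hσ.1.isHermitian_mpow _
  have hA : (S * ρ * S).PosSemidef := by
    simpa only [hS.eq] using hρ.1.mul_mul_conjTranspose_same S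
  refine ⟨fun H hH => ?_, ?_⟩
  · have hK : (T * H * T).PosSemidef := by
      simpa only [hT.eq] using hH.mul_mul_conjTranspose_same T
    have hH_eq : S * (T * H * T) * S = H := by
      rw [← mul_assoc, ← mul_assoc, hσ.mpow_mul_mpow_neg, one_mul, mul_assoc,
        hσ.mpow_neg_mul_mpow, mul_one]
    rw [← hH_eq, fAlpha_mpow_mul_mul_mpow α ρ _ hσ]
    exact hA.variational_le_re_trace_mpow hK hα
  · rw [fAlpha_mpow_mul_mul_mpow α ρ _ hσ]
    exact hA.variational_eq_re_trace_mpow hα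
end
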